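/- A regular multi-pointed category with kernels C is a 2-star-permutable category if and only if every square of type (1) in C is a star-regular pushout. -/

import Mathlib

open CategoryTheory CategoryTheory.Limits

universe v u

namespace Paper

variable {𝒞 : Type u} [Category.{v} 𝒞]

/-- `f` is a regular epimorphism: it is a coequaliser of some pair of morphisms. -/
def IsRegEpi {X Y : 𝒞} (f : X ⟶ Y) : Prop :=
  ∃ (Z : 𝒞) (a b : Z ⟶ X), a ≫ f = b ≫ f ∧
    ∀ {T : 𝒞} (h : X ⟶ T), a ≫ h = b ≫ h → ∃! u : Y ⟶ T, f ≫ u = h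

/-- Regular epimorphisms are pullback-stable. -/
def RegEpisStable (𝒞 : Type u) [Category.{v} 𝒞] : Prop :=
  ∀ {P X Y Z : 𝒞} (p₁ : P ⟶ X) (p₂ : P ⟶ Y) (f : X ⟶ Z) (g : Y ⟶ Z),
    IsPullback p₁ p₂ f g → IsRegEpi g → IsRegEpi p₁

/-- Every kernel pair admits a coequaliser. -/
def KernelPairsHaveCoequalisers (𝒞 : Type u) [Category.{v} 𝒞] : Prop :=
  ∀ {R X Y : 𝒞} (f : X ⟶ Y) (a b : R ⟶ X), IsKernelPair f a b →
    ∃ (Q : 𝒞) (q : X ⟶ Q), a ≫ q = b ≫ q ∧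
      ∀ {T : 𝒞} (h : X ⟶ T), a ≫ h = b ≫ h → ∃! u : Q ⟶ T, q ≫ u = h

/-- A relation from `X` to `Y`: a jointly monomorphic span. -/
structure Rel (𝒞 : Type u) [Category.{v} 𝒞] (X Y : 𝒞) where
  R : 𝒞
  p1 : R ⟶ X
  p2 : R ⟶ Y
  jm : ∀ {Z : 𝒞} (a b : Z ⟶ R), a ≫ p1 = b ≫ p1 → a ≫ p2 = b ≫ p2 → a = b

variable {X Y Z : 𝒞}

/-- `ρ` is a subrelation of `σ`. -/
def Rel.le (ρ σ : Rel 𝒞 X Y) : Prop :=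
  ∃ j : ρ.R ⟶ σ.R, j ≫ σ.p1 = ρ.p1 ∧ j ≫ σ.p2 = ρ.p2

/-- `ρ` and `σ` are the same relation (isomorphic as subobjects of `X × Y`). -/
def Rel.equiv (ρ σ : Rel 𝒞 X Y) : Prop := ρ.le σ ∧ σ.le ρ

/-- The opposite relation. -/
def Rel.op (ρ : Rel 𝒞 X Y) : Rel 𝒞 Y X :=
  ⟨ρ.R, ρ.p2, ρ.p1, fun a b h2 h1 => ρ.jm a b h1 h2⟩

/-- A morphism viewed as a relation. -/
def homRel (f : X ⟶ Y) : Rel 𝒞 X Y :=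
  ⟨X, 𝟙 X, f, fun a b h _ => by simpa using h⟩

/-- The discrete (diagonal) relation on `X`. -/
def diagRel (X : 𝒞) : Rel 𝒞 X X := homRel (𝟙 X)

/-- The kernel pair `Eq(f)` of `f` as a relation on `X`. -/
noncomputable def kerPairRel [HasPullbacks 𝒞] (f : X ⟶ Y) : Rel 𝒞 X X :=
  ⟨pullback f f, pullback.fst f f, pullback.snd f f,
    fun a b h1 h2 => pullback.hom_ext h1 h2⟩

/-- `τ` is the composite `σρ` (first `ρ` from `X` to `Y`, then `σ` from `Y` to `Z`),
i.e. the (regular epi, jointly mono) factorisation of the span induced on the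
pullback of `ρ.p2` and `σ.p1`. -/
def IsRelComp [HasPullbacks 𝒞] (σ : Rel 𝒞 Y Z) (ρ : Rel 𝒞 X Y) (τ : Rel 𝒞 X Z) : Prop :=
  ∃ e : pullback ρ.p2 σ.p1 ⟶ τ.R, IsRegEpi e ∧
    e ≫ τ.p1 = pullback.fst ρ.p2 σ.p1 ≫ ρ.p1 ∧
    e ≫ τ.p2 = pullback.snd ρ.p2 σ.p1 ≫ σ.p2

def Rel.IsReflexive (ρ : Rel 𝒞 X X) : Prop :=
  ∃ r : X ⟶ ρ.R, r ≫ ρ.p1 = 𝟙 X ∧ r ≫ ρ.p2 = 𝟙 X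

def Rel.IsSymmetric (ρ : Rel 𝒞 X X) : Prop :=
  ∃ s : ρ.R ⟶ ρ.R, s ≫ ρ.p1 = ρ.p2 ∧ s ≫ ρ.p2 = ρ.p1

def Rel.IsTransitive [HasPullbacks 𝒞] (ρ : Rel 𝒞 X X) : Prop :=
  ∃ t : pullback ρ.p2 ρ.p1 ⟶ ρ.R,
    t ≫ ρ.p1 = pullback.fst ρ.p2 ρ.p1 ≫ ρ.p1 ∧
    t ≫ ρ.p2 = pullback.snd ρ.p2 ρ.p1 ≫ ρ.p2

def Rel.IsEquivalence [HasPullbacks 𝒞] (ρ : Rel 𝒞 X X) : Prop :=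
  ρ.IsReflexive ∧ ρ.IsSymmetric ∧ ρ.IsTransitive

/-- A finitely complete category is a Mal'tsev category when every reflexive
relation in it is an equivalence relation. -/
def IsMaltsev (𝒞 : Type u) [Category.{v} 𝒞] [HasPullbacks 𝒞] : Prop :=
  ∀ {X : 𝒞} (ρ : Rel 𝒞 X X), ρ.IsReflexive → ρ.IsEquivalence

/-- A square of type (1): split epimorphisms `f` (with section `s`) and `g`
(with section `t`), regular epimorphisms `c` and `d`, with `f·c = d·g` and
`s·d = c·t`. -/
structure IsSquare1 {A B E D : 𝒞} (f : A ⟶ B) (s : B ⟶ A) (g : E ⟶ D) (t : D ⟶ E)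
    (c : E ⟶ A) (d : D ⟶ B) : Prop where
  sec_f : s ≫ f = 𝟙 B
  sec_g : t ≫ g = 𝟙 D
  regepi_c : IsRegEpi c
  regepi_d : IsRegEpi d
  comm1 : c ≫ f = g ≫ d
  comm2 : d ≫ s = t ≫ c

/-- `N` is an ideal of morphisms. -/
def IsIdeal (N : MorphismProperty 𝒞) : Prop :=
  ∀ {X Y Z : 𝒞} (f : X ⟶ Y) (g : Y ⟶ Z), N f ∨ N g → N (f ≫ g)

/-- `n` is an `N`-kernel of `f`. -/
def IsNKernel (N : MorphismProperty 𝒞) {X Y K : 𝒞} (f : X ⟶ Y) (n : K ⟶ X) : Prop :=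
  N (n ≫ f) ∧ ∀ {Z : 𝒞} (m : Z ⟶ X), N (m ≫ f) → ∃! u : Z ⟶ K, u ≫ n = m

/-- Every morphism admits an `N`-kernel. -/
def HasNKernels (N : MorphismProperty 𝒞) : Prop :=
  ∀ {X Y : 𝒞} (f : X ⟶ Y), ∃ (K : 𝒞) (n : K ⟶ X), IsNKernel N f n

/-- `τ` is the largest star subrelation `ρ*` of the relation `ρ`. -/
def IsLargestStarSub (N : MorphismProperty 𝒞) (ρ τ : Rel 𝒞 X Y) : Prop :=
  τ.le ρ ∧ N τ.p1 ∧ ∀ σ : Rel 𝒞 X Y, σ.le ρ → N σ.p1 → σ.le τ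

/-- `(s1, s2)` is the star-kernel of `f`: the universal star coequalised by `f`. -/
def IsStarKernel (N : MorphismProperty 𝒞) {S X Y : 𝒞} (f : X ⟶ Y) (s1 s2 : S ⟶ X) : Prop :=
  N s1 ∧ s1 ≫ f = s2 ≫ f ∧
    ∀ {T : 𝒞} (t1 t2 : T ⟶ X), N t1 → t1 ≫ f = t2 ≫ f →
      ∃! u : T ⟶ S, u ≫ s1 = t1 ∧ u ≫ s2 = t2

/-- `(ν1, ν2)` is the star of the pullback relation of `(g, δ)`: the universal
pair with `ν1 ∈ N` and `δ·ν1 = g·ν2`. -/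
def IsStarPullbackRel (N : MorphismProperty 𝒞) {W E D P : 𝒞} (δ : W ⟶ D) (g : E ⟶ D)
    (ν1 : P ⟶ W) (ν2 : P ⟶ E) : Prop :=
  N ν1 ∧ ν1 ≫ δ = ν2 ≫ g ∧
    ∀ {T : 𝒞} (t1 : T ⟶ W) (t2 : T ⟶ E), N t1 → t1 ≫ δ = t2 ≫ g →
      ∃! u : T ⟶ P, u ≫ ν1 = t1 ∧ u ≫ ν2 = t2

/-- `f` is a coequaliser of `(s1, s2)`. -/
def IsCoeqOf {S X Y : 𝒞} (f : X ⟶ Y) (s1 s2 : S ⟶ X) : Prop :=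
  s1 ≫ f = s2 ≫ f ∧ ∀ {T : 𝒞} (h : X ⟶ T), s1 ≫ h = s2 ≫ h → ∃! u : Y ⟶ T, f ≫ u = h

/-- Star-regularity: every regular epimorphism is a coequaliser of a star. -/
def StarRegular (𝒞 : Type u) [Category.{v} 𝒞] (N : MorphismProperty 𝒞) : Prop :=
  ∀ {X Y : 𝒞} (f : X ⟶ Y), IsRegEpi f →
    ∃ (S : 𝒞) (s1 s2 : S ⟶ X), N s1 ∧ IsCoeqOf f s1 s2

/-- `f` is saturating: the induced morphism between the `N`-kernels of the
identities is a regular epimorphism. -/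
def Saturating (N : MorphismProperty 𝒞) {X Y : 𝒞} (f : X ⟶ Y) : Prop :=
  ∀ {KX KY : 𝒞} (nX : KX ⟶ X) (nY : KY ⟶ Y), IsNKernel N (𝟙 X) nX → IsNKernel N (𝟙 Y) nY →
    ∀ u : KX ⟶ KY, u ≫ nY = nX ≫ f → IsRegEpi u

/-- `X` is an `N`-trivial object. -/
def NTrivial (N : MorphismProperty 𝒞) (X : 𝒞) : Prop := N (𝟙 X)

/-- The multi-pointed category has enough trivial objects: `N` is a closed ideal and
`N`-trivial objects are closed under subobjects and squares. -/
def EnoughTrivialObjects [HasBinaryProducts 𝒞] (N : MorphismProperty 𝒞) : Prop :=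
  (∀ {X Y : 𝒞} (f : X ⟶ Y), N f → ∃ (T : 𝒞) (p : X ⟶ T) (q : T ⟶ Y),
      NTrivial N T ∧ p ≫ q = f) ∧
  (∀ {S X : 𝒞} (m : S ⟶ X), Mono m → NTrivial N X → NTrivial N S) ∧
  (∀ X : 𝒞, NTrivial N X → NTrivial N (X ⨯ X))

/-- A square of type (1) is a star-regular pushout when `(c g°)* = f° d*`. -/
def IsStarRegularPushout [HasPullbacks 𝒞] (N : MorphismProperty 𝒞) {A B E D : 𝒞}
    (f : A ⟶ B) (g : E ⟶ D) (c : E ⟶ A) (d : D ⟶ B) : Prop :=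
  ∀ (ρ τ μ : Rel 𝒞 D A) (ds : Rel 𝒞 D B),
    IsRelComp (homRel c) (Rel.op (homRel g)) ρ → IsLargestStarSub N ρ τ →
    IsLargestStarSub N (homRel d) ds → IsRelComp (Rel.op (homRel f)) ds μ →
    τ.equiv μ

/-- 2-star-permutability: `Eq(f) Eq(g)* = Eq(g) Eq(f)*` for all regular
epimorphisms `f`, `g` with the same domain. -/
def TwoStarPermutable (𝒞 : Type u) [Category.{v} 𝒞] [HasPullbacks 𝒞]
    (N : MorphismProperty 𝒞) : Prop :=
  ∀ {X Y Z : 𝒞} (f : X ⟶ Y) (g : X ⟶ Z), IsRegEpi f → IsRegEpi g →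
    ∀ (sf sg : Rel 𝒞 X X), IsLargestStarSub N (kerPairRel f) sf →
      IsLargestStarSub N (kerPairRel g) sg →
    ∀ (τ₁ τ₂ : Rel 𝒞 X X), IsRelComp (kerPairRel f) sg τ₁ →
      IsRelComp (kerPairRel g) sf τ₂ → τ₁.equiv τ₂

section Pointed

variable [HasZeroMorphisms 𝒞]

/-- `k` is a kernel of `f`. -/
def IsKernelOf {K X Y : 𝒞} (k : K ⟶ X) (f : X ⟶ Y) : Prop :=
  k ≫ f = 0 ∧ ∀ {Z : 𝒞} (m : Z ⟶ X), m ≫ f = 0 → ∃! u : Z ⟶ K, u ≫ k = m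

/-- `f` is a cokernel of `k`. -/
def IsCokernelOf {X Y K : 𝒞} (f : X ⟶ Y) (k : K ⟶ X) : Prop :=
  k ≫ f = 0 ∧ ∀ {T : 𝒞} (h : X ⟶ T), k ≫ h = 0 → ∃! u : Y ⟶ T, f ≫ u = h

/-- Short exact sequence `K → X ↠ Y`. -/
def IsShortExact {K X Y : 𝒞} (k : K ⟶ X) (f : X ⟶ Y) : Prop :=
  IsKernelOf k f ∧ IsCokernelOf f k

/-- Subtractivity: every reflexive, left punctual relation is right punctual. -/
def IsSubtractive (𝒞 : Type u) [Category.{v} 𝒞] [HasZeroMorphisms 𝒞] : Prop :=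
  ∀ {X : 𝒞} (ρ : Rel 𝒞 X X), ρ.IsReflexive →
    (∃ l : X ⟶ ρ.R, l ≫ ρ.p1 = 𝟙 X ∧ l ≫ ρ.p2 = 0) →
    (∃ r : X ⟶ ρ.R, r ≫ ρ.p1 = 0 ∧ r ≫ ρ.p2 = 𝟙 X)

end Pointed

/-! Relations are jointly monic, so in a regular category a relation contains a generalised
element `(x, y)` as soon as it contains its restriction along a regular epimorphism, and an
element of a composite `σρ` is, after such a cover, an element of `ρ` followed by one of `σ`.
Both directions are chases of generalised elements in this sense.

Given `Eq(c) Eq(g)* = Eq(g) Eq(c)*`, a star element `(x, a)` of `f° d*` lies in `c g°`: cover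
`a = c e₀`; then `c (t x) = s d x = s f a = c (t g e₀)` and `g (t g e₀) = g e₀` put `(t x, e₀)`
in `Eq(g) Eq(c)*`, hence in `Eq(c) Eq(g)*`, whose middle element `e` has `g e = x`, `c e = a`.

Conversely, for regular epimorphisms `f : X → Y` and `g : X → Z`, the first projections of
`Eq(f)` and of its image `S` in `Z × Z` under `g × g` form a square of type (1). An element
`(x, y, z)` of `Eq(f) Eq(g)*` yields the star element `(x, (g y, g z))` of `π₁° g*`; the
star-regular pushout property lifts it to some `(x, w)` in `Eq(f)` with `(g x, g w) = (g y, g z)`,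
and `w` exhibits `(x, z)` in `Eq(g) Eq(f)*`. -/

section RegularEpi

lemma IsRegEpi.cancel {f : X ⟶ Y} (hf : IsRegEpi f) {T : 𝒞} {u v : Y ⟶ T}
    (h : f ≫ u = f ≫ v) : u = v := by
  obtain ⟨Z, a, b, hab, hup⟩ := hf
  obtain ⟨w, -, huniq⟩ := hup (f ≫ u) (by simp only [← Category.assoc, hab])
  exact (huniq u rfl).trans (huniq v h.symm).symm

lemma IsRegEpi.isCoeqOf_kernelPair [HasPullbacks 𝒞] {f : X ⟶ Y} (hf : IsRegEpi f) :
    IsCoeqOf f (pullback.fst f f) (pullback.snd f f) := by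
  obtain ⟨Z, a, b, hab, hup⟩ := hf
  refine ⟨pullback.condition, fun h hh => hup h ?_⟩
  simpa only [pullback.lift_fst_assoc, pullback.lift_snd_assoc] using
    pullback.lift a b hab ≫= hh

lemma isRegEpi_of_comp_eq_id {g : X ⟶ Y} (t : Y ⟶ X) (ht : t ≫ g = 𝟙 Y) : IsRegEpi g := by
  refine ⟨X, g ≫ t, 𝟙 X, by simp [ht], fun {T} h hh => ⟨t ≫ h, ?_, ?_⟩⟩
  · simpa using hh
  · rintro u rfl
    simp [reassoc_of% ht]

lemma IsRegEpi.exists_cover_lift [HasPullbacks 𝒞] (hstab : RegEpisStable 𝒞) {c : X ⟶ Y}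
    (hc : IsRegEpi c) {T : 𝒞} (a : T ⟶ Y) :
    ∃ (T' : 𝒞) (q : T' ⟶ T) (e : T' ⟶ X), IsRegEpi q ∧ q ≫ a = e ≫ c :=
  ⟨_, pullback.fst a c, pullback.snd a c,
    hstab _ _ _ _ (IsPullback.of_hasPullback a c) hc, pullback.condition⟩

lemma exists_isRegEpi_mono_fac [HasPullbacks 𝒞] (hcoeq : KernelPairsHaveCoequalisers 𝒞)
    (hstab : RegEpisStable 𝒞) (h : X ⟶ Y) :
    ∃ (I : 𝒞) (q : X ⟶ I) (m : I ⟶ Y), IsRegEpi q ∧ Mono m ∧ q ≫ m = h := by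
  obtain ⟨I, q, hcond, hup⟩ := hcoeq h _ _ (IsPullback.of_hasPullback h h)
  obtain ⟨m, hm, -⟩ := hup h pullback.condition
  have hq : IsRegEpi q := ⟨_, _, _, hcond, hup⟩
  refine ⟨I, q, m, hq, ⟨fun {T} a b hab => ?_⟩, hm⟩
  obtain ⟨T₁, q₁, w₁, hq₁, ha⟩ := hq.exists_cover_lift hstab a
  obtain ⟨T₂, q₂, w₂, hq₂, hb⟩ := hq.exists_cover_lift hstab (q₁ ≫ b)
  -- the lifts `q₂ ≫ w₁` and `w₂` lie in the kernel pair of `h`, which `q` coequalises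
  have hw : (q₂ ≫ w₁) ≫ h = w₂ ≫ h := by
    calc (q₂ ≫ w₁) ≫ h = q₂ ≫ (q₁ ≫ a) ≫ m := by simp [← hm, ha]
      _ = (q₂ ≫ q₁ ≫ b) ≫ m := by simp [hab]
      _ = w₂ ≫ h := by rw [hb, ← hm, Category.assoc]
  apply hq₁.cancel
  apply hq₂.cancel
  calc q₂ ≫ q₁ ≫ a = (q₂ ≫ w₁) ≫ q := by rw [ha, Category.assoc]
    _ = w₂ ≫ q := by
      simpa only [pullback.lift_fst_assoc, pullback.lift_snd_assoc] using
        pullback.lift _ _ hw ≫= hcond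
    _ = q₂ ≫ q₁ ≫ b := hb.symm

end RegularEpi

namespace Rel

variable {T T' : 𝒞}

def Mem (ρ : Rel 𝒞 X Y) (x : T ⟶ X) (y : T ⟶ Y) : Prop :=
  ∃ k : T ⟶ ρ.R, k ≫ ρ.p1 = x ∧ k ≫ ρ.p2 = y

variable {ρ σ : Rel 𝒞 X Y} {x : T ⟶ X} {y : T ⟶ Y}

lemma mem_self (ρ : Rel 𝒞 X Y) : ρ.Mem ρ.p1 ρ.p2 :=
  ⟨𝟙 _, Category.id_comp _, Category.id_comp _⟩

lemma le_iff_mem : ρ.le σ ↔ σ.Mem ρ.p1 ρ.p2 := Iff.rfl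

lemma Mem.of_le (h : ρ.Mem x y) (hle : ρ.le σ) : σ.Mem x y := by
  obtain ⟨k, rfl, rfl⟩ := h
  obtain ⟨j, hj1, hj2⟩ := hle
  exact ⟨k ≫ j, by simp [hj1], by simp [hj2]⟩

lemma mem_of_cover [HasPullbacks 𝒞] {q : T' ⟶ T} (hq : IsRegEpi q)
    (h : ρ.Mem (q ≫ x) (q ≫ y)) : ρ.Mem x y := by
  obtain ⟨k, hk1, hk2⟩ := h
  have hk : pullback.fst q q ≫ k = pullback.snd q q ≫ k :=
    ρ.jm _ _ (by simp [hk1, pullback.condition_assoc])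
      (by simp [hk2, pullback.condition_assoc])
  obtain ⟨j, hj, -⟩ := hq.isCoeqOf_kernelPair.2 k hk
  exact ⟨j, hq.cancel (by rw [reassoc_of% hj, hk1]), hq.cancel (by rw [reassoc_of% hj, hk2])⟩

@[simp]
lemma mem_op_iff {x : T ⟶ Y} {y : T ⟶ X} : ρ.op.Mem x y ↔ ρ.Mem y x :=
  ⟨fun ⟨k, h1, h2⟩ => ⟨k, h2, h1⟩, fun ⟨k, h1, h2⟩ => ⟨k, h2, h1⟩⟩

@[simp]
lemma mem_homRel_iff {f : X ⟶ Y} : (homRel f).Mem x y ↔ x ≫ f = y := by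
  refine ⟨fun ⟨k, h1, h2⟩ => ?_, fun h => ⟨x, Category.comp_id x, h⟩⟩
  rw [← h1, ← h2, Category.assoc]
  exact k ≫= Category.id_comp f

@[simp]
lemma mem_kerPairRel_iff [HasPullbacks 𝒞] {f : X ⟶ Y} {x y : T ⟶ X} :
    (kerPairRel f).Mem x y ↔ x ≫ f = y ≫ f := by
  refine ⟨fun ⟨k, h1, h2⟩ => ?_,
    fun h => ⟨pullback.lift x y h, pullback.lift_fst _ _ _, pullback.lift_snd _ _ _⟩⟩
  rw [← h1, ← h2, Category.assoc, Category.assoc]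
  exact k ≫= pullback.condition

end Rel

open Paper.Rel

section Composite

variable {T : 𝒞} {ρ : Rel 𝒞 X Y} {σ : Rel 𝒞 Y Z} {τ : Rel 𝒞 X Z}
  {x : T ⟶ X} {z : T ⟶ Z}

lemma IsRelComp.mem [HasPullbacks 𝒞] (hτ : IsRelComp σ ρ τ) {y : T ⟶ Y}
    (h₁ : ρ.Mem x y) (h₂ : σ.Mem y z) : τ.Mem x z := by
  obtain ⟨e, -, he1, he2⟩ := hτ
  obtain ⟨k₁, rfl, rfl⟩ := h₁
  obtain ⟨k₂, hk, rfl⟩ := h₂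
  exact ⟨pullback.lift k₁ k₂ hk.symm ≫ e, by simp [he1, pullback.lift_fst_assoc],
    by simp [he2, pullback.lift_snd_assoc]⟩

lemma IsRelComp.exists_cover_of_mem [HasPullbacks 𝒞] (hstab : RegEpisStable 𝒞)
    (hτ : IsRelComp σ ρ τ) (h : τ.Mem x z) :
    ∃ (T' : 𝒞) (q : T' ⟶ T) (y : T' ⟶ Y),
      IsRegEpi q ∧ ρ.Mem (q ≫ x) y ∧ σ.Mem y (q ≫ z) := by
  obtain ⟨e, he, he1, he2⟩ := hτ
  obtain ⟨k, rfl, rfl⟩ := h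
  obtain ⟨T', q, l, hq, hl⟩ := he.exists_cover_lift hstab k
  refine ⟨T', q, l ≫ pullback.fst _ _ ≫ ρ.p2, hq, ⟨l ≫ pullback.fst _ _, ?_, by simp⟩,
    ⟨l ≫ pullback.snd _ _, by simp [pullback.condition], ?_⟩⟩
  · simp [reassoc_of% hl, he1]
  · simp [reassoc_of% hl, he2]

lemma exists_isRegEpi_rel_fac [HasFiniteLimits 𝒞] (hcoeq : KernelPairsHaveCoequalisers 𝒞)
    (hstab : RegEpisStable 𝒞) {W : 𝒞} (p : W ⟶ X) (r : W ⟶ Z) :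
    ∃ (τ : Rel 𝒞 X Z) (e : W ⟶ τ.R), IsRegEpi e ∧ e ≫ τ.p1 = p ∧ e ≫ τ.p2 = r := by
  obtain ⟨I, q, m, hq, hm, hqm⟩ := exists_isRegEpi_mono_fac hcoeq hstab (prod.lift p r)
  refine ⟨⟨I, m ≫ prod.fst, m ≫ prod.snd, fun a b h1 h2 => ?_⟩, q, hq, ?_, ?_⟩
  · exact (cancel_mono m).1 (prod.hom_ext (by simpa using h1) (by simpa using h2))
  · simp [reassoc_of% hqm, prod.lift_fst]
  · simp [reassoc_of% hqm, prod.lift_snd]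

lemma exists_isRelComp [HasFiniteLimits 𝒞] (hcoeq : KernelPairsHaveCoequalisers 𝒞)
    (hstab : RegEpisStable 𝒞) (σ : Rel 𝒞 Y Z) (ρ : Rel 𝒞 X Y) :
    ∃ τ, IsRelComp σ ρ τ := by
  obtain ⟨τ, e, he, h1, h2⟩ := exists_isRegEpi_rel_fac hcoeq hstab
    (pullback.fst ρ.p2 σ.p1 ≫ ρ.p1) (pullback.snd ρ.p2 σ.p1 ≫ σ.p2)
  exact ⟨τ, e, he, h1, h2⟩

end Composite

section Star

variable {N : MorphismProperty 𝒞} {T K : 𝒞}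

lemma IsNKernel.cancel (hN : IsIdeal N) {f : X ⟶ Y} {n : K ⟶ X} (h : IsNKernel N f n)
    {u v : T ⟶ K} (huv : u ≫ n = v ≫ n) : u = v := by
  obtain ⟨w, -, huniq⟩ :=
    h.2 (u ≫ n) (by rw [Category.assoc]; exact hN _ _ (Or.inr h.1))
  exact (huniq u rfl).trans (huniq v huv.symm).symm

lemma exists_isLargestStarSub [HasPullbacks 𝒞] (hN : IsIdeal N) (hker : HasNKernels N)
    (ρ : Rel 𝒞 X Y) :
    ∃ τ, IsLargestStarSub N ρ τ ∧
      ∀ {T : 𝒞} {x : T ⟶ X} {y : T ⟶ Y}, ρ.Mem x y → N x → τ.Mem x y := by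
  obtain ⟨K, n, hn⟩ := hker (𝟙 X)
  have hjm : ∀ {W : 𝒞} (a b : W ⟶ pullback n ρ.p1),
      a ≫ pullback.snd _ _ ≫ ρ.p1 = b ≫ pullback.snd _ _ ≫ ρ.p1 →
      a ≫ pullback.snd _ _ ≫ ρ.p2 = b ≫ pullback.snd _ _ ≫ ρ.p2 → a = b := by
    intro W a b h1 h2
    have hs : a ≫ pullback.snd _ _ = b ≫ pullback.snd _ _ :=
      ρ.jm _ _ (by simpa using h1) (by simpa using h2)
    refine pullback.hom_ext (hn.cancel hN ?_) hs
    simp [pullback.condition, reassoc_of% hs]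
  -- `n` classifies `N` (a morphism into `X` is in `N` iff it factors through `n`), so `ρ*` is
  -- the pullback of `ρ` along `n`
  let τ : Rel 𝒞 X Y :=
    ⟨pullback n ρ.p1, pullback.snd _ _ ≫ ρ.p1, pullback.snd _ _ ≫ ρ.p2, hjm⟩
  have hmem : ∀ {T : 𝒞} {x : T ⟶ X} {y : T ⟶ Y}, ρ.Mem x y → N x → τ.Mem x y := by
    rintro T x y ⟨k, rfl, rfl⟩ hx
    obtain ⟨u, hu, -⟩ := hn.2 (k ≫ ρ.p1) (by simpa using hx)
    exact ⟨pullback.lift u k hu, by simp [τ, pullback.lift_snd_assoc],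
      by simp [τ, pullback.lift_snd_assoc]⟩
  have hτN : N τ.p1 := by
    change N (pullback.snd n ρ.p1 ≫ ρ.p1)
    rw [← pullback.condition]
    exact hN _ _ (Or.inr (by simpa using hn.1))
  exact ⟨τ, ⟨⟨pullback.snd _ _, rfl, rfl⟩, hτN, fun σ hσ hσN => hmem hσ hσN⟩, hmem⟩

lemma IsLargestStarSub.mem_iff [HasPullbacks 𝒞] (hN : IsIdeal N) (hker : HasNKernels N)
    {ρ τ : Rel 𝒞 X Y} (hτ : IsLargestStarSub N ρ τ) {x : T ⟶ X} {y : T ⟶ Y} :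
    τ.Mem x y ↔ N x ∧ ρ.Mem x y := by
  refine ⟨fun h => ⟨?_, h.of_le hτ.1⟩, fun ⟨hx, h⟩ => ?_⟩
  · obtain ⟨k, rfl, -⟩ := h
    exact hN _ _ (Or.inr hτ.2.1)
  · obtain ⟨τ₀, hτ₀, hmem⟩ := exists_isLargestStarSub hN hker ρ
    exact (hmem h hx).of_le (hτ.2.2 τ₀ hτ₀.1 hτ₀.2.1)

end Star

section Squares

variable {N : MorphismProperty 𝒞} {A B E D T : 𝒞} {f : A ⟶ B} {s : B ⟶ A} {g : E ⟶ D}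
  {t : D ⟶ E} {c : E ⟶ A} {d : D ⟶ B}

lemma IsSquare1.mem_of_twoStarPermutable [HasFiniteLimits 𝒞]
    (hcoeq : KernelPairsHaveCoequalisers 𝒞) (hstab : RegEpisStable 𝒞) (hN : IsIdeal N)
    (hker : HasNKernels N) (h2sp : TwoStarPermutable 𝒞 N) (hsq : IsSquare1 f s g t c d)
    {ρ : Rel 𝒞 D A} (hρ : IsRelComp (homRel c) (homRel g).op ρ) {x : T ⟶ D} {a : T ⟶ A}
    (hx : N x) (hxa : a ≫ f = x ≫ d) : ρ.Mem x a := by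
  obtain ⟨T₁, q₁, e₀, hq₁, he₀⟩ := hsq.regepi_c.exists_cover_lift hstab a
  obtain ⟨sc, hsc, -⟩ := exists_isLargestStarSub hN hker (kerPairRel c)
  obtain ⟨sg, hsg, -⟩ := exists_isLargestStarSub hN hker (kerPairRel g)
  obtain ⟨τ₁, hτ₁⟩ := exists_isRelComp hcoeq hstab (kerPairRel c) sg
  obtain ⟨τ₂, hτ₂⟩ := exists_isRelComp hcoeq hstab (kerPairRel g) sc
  have hperm := h2sp c g hsq.regepi_c (isRegEpi_of_comp_eq_id t hsq.sec_g) sc sg hsc hsg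
    τ₁ τ₂ hτ₁ hτ₂
  have htx : (q₁ ≫ x ≫ t) ≫ c = (e₀ ≫ g ≫ t) ≫ c := by
    calc (q₁ ≫ x ≫ t) ≫ c = q₁ ≫ a ≫ f ≫ s := by
          simp [← hsq.comm2, reassoc_of% hxa]
      _ = (e₀ ≫ g ≫ t) ≫ c := by
          simp [reassoc_of% he₀, reassoc_of% hsq.comm1, hsq.comm2]
  have hNtx : N (q₁ ≫ x ≫ t) := hN _ _ (Or.inr (hN _ _ (Or.inl hx)))
  have hτ₂x : τ₂.Mem (q₁ ≫ x ≫ t) e₀ :=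
    hτ₂.mem (y := e₀ ≫ g ≫ t) ((hsc.mem_iff hN hker).2 ⟨hNtx, by simpa using htx⟩)
      (by simp [hsq.sec_g])
  obtain ⟨T₂, q₂, e, hq₂, hge, hce⟩ :=
    hτ₁.exists_cover_of_mem hstab (hτ₂x.of_le hperm.2)
  rw [hsg.mem_iff hN hker, mem_kerPairRel_iff] at hge
  rw [mem_kerPairRel_iff] at hce
  refine mem_of_cover hq₁ (mem_of_cover hq₂ (hρ.mem (y := e) ?_ ?_))
  · simpa [hsq.sec_g] using hge.2.symm
  · simp [hce, he₀]

lemma IsSquare1.isStarRegularPushout_of_twoStarPermutable [HasFiniteLimits 𝒞]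
    (hcoeq : KernelPairsHaveCoequalisers 𝒞) (hstab : RegEpisStable 𝒞) (hN : IsIdeal N)
    (hker : HasNKernels N) (h2sp : TwoStarPermutable 𝒞 N) (hsq : IsSquare1 f s g t c d) :
    IsStarRegularPushout N f g c d := by
  intro ρ τ μ ds hρ hτ hds hμ
  constructor
  · rw [le_iff_mem]
    obtain ⟨hNx, hρx⟩ := (hτ.mem_iff hN hker).1 (mem_self τ)
    obtain ⟨T', q, e, hq, hge, hce⟩ := hρ.exists_cover_of_mem hstab hρx
    simp only [mem_op_iff, mem_homRel_iff] at hge hce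
    refine mem_of_cover hq (hμ.mem (y := q ≫ τ.p1 ≫ d) ?_ ?_)
    · exact (hds.mem_iff hN hker).2 ⟨hN _ _ (Or.inr hNx), by simp⟩
    · simp [← hce, hsq.comm1, reassoc_of% hge]
  · rw [le_iff_mem]
    obtain ⟨T', q, b, hq, hxb, hba⟩ := hμ.exists_cover_of_mem hstab (mem_self μ)
    rw [hds.mem_iff hN hker, mem_homRel_iff] at hxb
    rw [mem_op_iff, mem_homRel_iff] at hba
    refine mem_of_cover hq ((hτ.mem_iff hN hker).2 ⟨hxb.1, ?_⟩)
    exact hsq.mem_of_twoStarPermutable hcoeq hstab hN hker h2sp hρ hxb.1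
      (by simp [hba, hxb.2])

-- `S` is the image of `Eq(f)` under `g × g`, i.e. the relation `g Eq(f) g°` on `Z`.
lemma exists_isSquare1_kernelPair [HasFiniteLimits 𝒞] (hcoeq : KernelPairsHaveCoequalisers 𝒞)
    (hstab : RegEpisStable 𝒞) (f : X ⟶ Y) {g : X ⟶ Z} (hg : IsRegEpi g) :
    ∃ (S : Rel 𝒞 Z Z) (e : pullback f f ⟶ S.R) (δ : Z ⟶ S.R),
      IsSquare1 S.p1 δ (pullback.fst f f) (pullback.diagonal f) e g ∧
        e ≫ S.p2 = pullback.snd f f ≫ g := by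
  obtain ⟨S, e, he, he1, he2⟩ :=
    exists_isRegEpi_rel_fac hcoeq hstab (pullback.fst f f ≫ g) (pullback.snd f f ≫ g)
  have hδ : pullback.fst g g ≫ pullback.diagonal f ≫ e =
      pullback.snd g g ≫ pullback.diagonal f ≫ e :=
    S.jm _ _ (by simp [he1, pullback.condition]) (by simp [he2, pullback.condition])
  obtain ⟨δ, hgδ, -⟩ := hg.isCoeqOf_kernelPair.2 _ hδ
  refine ⟨S, e, δ, ⟨hg.cancel ?_, by simp, he, hg, he1, hgδ⟩, he2⟩
  simp [reassoc_of% hgδ, he1]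

lemma mem_of_forall_isStarRegularPushout [HasFiniteLimits 𝒞]
    (hcoeq : KernelPairsHaveCoequalisers 𝒞) (hstab : RegEpisStable 𝒞) (hN : IsIdeal N)
    (hker : HasNKernels N)
    (hsq : ∀ {A B E D : 𝒞} (f : A ⟶ B) (s : B ⟶ A) (g : E ⟶ D) (t : D ⟶ E)
        (c : E ⟶ A) (d : D ⟶ B), IsSquare1 f s g t c d → IsStarRegularPushout N f g c d)
    {f : X ⟶ Y} {g : X ⟶ Z} (hg : IsRegEpi g) {sf τ₂ : Rel 𝒞 X X}
    (hsf : IsLargestStarSub N (kerPairRel f) sf) (hτ₂ : IsRelComp (kerPairRel g) sf τ₂)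
    {x y z : T ⟶ X} (hx : N x) (hxy : x ≫ g = y ≫ g) (hyz : y ≫ f = z ≫ f) :
    τ₂.Mem x z := by
  obtain ⟨S, e, δ, hsq1, he2⟩ := exists_isSquare1_kernelPair hcoeq hstab f hg
  obtain ⟨ρ, hρ⟩ := exists_isRelComp hcoeq hstab (homRel e) (homRel (pullback.fst f f)).op
  obtain ⟨τ, hτ, -⟩ := exists_isLargestStarSub hN hker ρ
  obtain ⟨ds, hds, -⟩ := exists_isLargestStarSub hN hker (homRel g)
  obtain ⟨μ, hμ⟩ := exists_isRelComp hcoeq hstab (homRel S.p1).op ds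
  have hsrp := hsq _ _ _ _ _ _ hsq1 ρ τ μ ds hρ hτ hds hμ
  have hμκ : μ.Mem x (pullback.lift y z hyz ≫ e) :=
    hμ.mem (y := x ≫ g) ((hds.mem_iff hN hker).2 ⟨hx, by simp⟩)
      (by simp [hsq1.comm1, pullback.lift_fst_assoc, hxy])
  obtain ⟨T', q, r, hq, hrx, hre⟩ :=
    hρ.exists_cover_of_mem hstab ((hτ.mem_iff hN hker).1 (hμκ.of_le hsrp.2)).2
  simp only [mem_op_iff, mem_homRel_iff] at hrx hre
  refine mem_of_cover hq (hτ₂.mem (y := r ≫ pullback.snd f f) ?_ ?_)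
  · refine (hsf.mem_iff hN hker).2 ⟨hN _ _ (Or.inr hx), ?_⟩
    simp [← hrx, pullback.condition]
  · simpa [he2, pullback.lift_snd_assoc] using hre =≫ S.p2

lemma le_of_forall_isStarRegularPushout [HasFiniteLimits 𝒞]
    (hcoeq : KernelPairsHaveCoequalisers 𝒞) (hstab : RegEpisStable 𝒞) (hN : IsIdeal N)
    (hker : HasNKernels N)
    (hsq : ∀ {A B E D : 𝒞} (f : A ⟶ B) (s : B ⟶ A) (g : E ⟶ D) (t : D ⟶ E)
        (c : E ⟶ A) (d : D ⟶ B), IsSquare1 f s g t c d → IsStarRegularPushout N f g c d)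
    {f : X ⟶ Y} {g : X ⟶ Z} (hg : IsRegEpi g) {sf sg τ₁ τ₂ : Rel 𝒞 X X}
    (hsf : IsLargestStarSub N (kerPairRel f) sf) (hsg : IsLargestStarSub N (kerPairRel g) sg)
    (hτ₁ : IsRelComp (kerPairRel f) sg τ₁) (hτ₂ : IsRelComp (kerPairRel g) sf τ₂) :
    τ₁.le τ₂ := by
  rw [le_iff_mem]
  obtain ⟨T, q, y, hq, hxy, hyz⟩ := hτ₁.exists_cover_of_mem hstab (mem_self τ₁)
  rw [hsg.mem_iff hN hker, mem_kerPairRel_iff] at hxy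
  rw [mem_kerPairRel_iff] at hyz
  exact mem_of_cover hq
    (mem_of_forall_isStarRegularPushout hcoeq hstab hN hker hsq hg hsf hτ₂ hxy.1 hxy.2 hyz)

end Squares

/-- A regular multi-pointed category with kernels is
2-star-permutable iff every square of type (1) is a star-regular pushout. -/
theorem statement4 [HasFiniteLimits 𝒞]
    (hcoeq : KernelPairsHaveCoequalisers 𝒞) (hstab : RegEpisStable 𝒞)
    (N : MorphismProperty 𝒞) (hN : IsIdeal N) (hker : HasNKernels N) :
    TwoStarPermutable 𝒞 N ↔
      ∀ {A B E D : 𝒞} (f : A ⟶ B) (s : B ⟶ A) (g : E ⟶ D) (t : D ⟶ E)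
        (c : E ⟶ A) (d : D ⟶ B), IsSquare1 f s g t c d →
        IsStarRegularPushout N f g c d := by
  refine ⟨fun h2sp _ _ _ _ f s g t c d hsq =>
    hsq.isStarRegularPushout_of_twoStarPermutable hcoeq hstab hN hker h2sp, ?_⟩
  intro hsq _ _ _ f g hf hg sf sg hsf hsg τ₁ τ₂ h₁ h₂
  exact ⟨le_of_forall_isStarRegularPushout hcoeq hstab hN hker hsq hg hsf hsg h₁ h₂,
    le_of_forall_isStarRegularPushout hcoeq hstab hN hker hsq hf hsg hsf h₂ h₁⟩

end Paper
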